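/- Let h be a complete Heyting algebra embedded in ∏_{i∈I} 2, let P be a nonempty set, and let H be the pullback (in Sets) of the embedding h → ∏_{i∈I} 2 along the componentwise D-quotient map ∏_{i∈I} P̂ → ∏_{i∈I} 2. Then H, with componentwise operations from P̂, is a strongly distributive skew lattice whose quotient H/D by Green's relation is isomorphic to h as a lattice. -/

import Mathlib

/-- The meet on P̂ = P ∪ {0} (with `none` as 0). -/
def pMeet {P : Type*} : Option P → Option P → Option P
  | some a, some _ => some a
  | _, _ => none

/-- The join on P̂ = P ∪ {0}. -/
def pJoin {P : Type*} : Option P → Option P → Option P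
  | some _, some b => some b
  | none, y => y
  | x, none => x

/-- Componentwise meet on ∏_{i∈I} P̂. -/
def prodMeet {I P : Type*} (x y : I → Option P) : I → Option P := fun i => pMeet (x i) (y i)

/-- Componentwise join on ∏_{i∈I} P̂. -/
def prodJoin {I P : Type*} (x y : I → Option P) : I → Option P := fun i => pJoin (x i) (y i)

/-- Green's relation D on ∏_{i∈I} P̂. -/
def prodD {I P : Type*} (x y : I → Option P) : Prop :=
  prodMeet (prodMeet x y) x = x ∧ prodMeet (prodMeet y x) y = y

/-- The pullback H of the embedding e : h → ∏_i 2 along the componentwise D-quotient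
∏_i P̂ → ∏_i 2 (which sends a coordinate to `true` iff it is nonzero); identifying
the two-element lattice 2 with `Bool`. -/
def pullbackH {I P h : Type*} (e : h → I → Bool) : Set (I → Option P) :=
  {x | ∃ a : h, ∀ i, (x i).isSome = e a i}


/-!
Every skew-lattice identity in question holds already in P̂ (a case check on whether each
argument is `0`), hence componentwise on all of ∏ P̂. The D-quotient map `x ↦ (x i ≠ 0)_i`
turns the operations of ∏ P̂ into those of ∏ 2 and its fibres are exactly the D-classes, so on
the pullback H it descends, through the embedding `e`, to a lattice isomorphism H/D ≅ h; it is
onto because P is nonempty.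
-/

section PHat

variable {P : Type*} (x y z : Option P)

theorem pMeet_isSome : (pMeet x y).isSome = (x.isSome && y.isSome) := by
  cases x <;> cases y <;> rfl

theorem pJoin_isSome : (pJoin x y).isSome = (x.isSome || y.isSome) := by
  cases x <;> cases y <;> rfl

theorem pMeet_self : pMeet x x = x := by
  cases x <;> rfl

theorem pJoin_self : pJoin x x = x := by
  cases x <;> rfl

theorem pMeet_pJoin_self : pMeet x (pJoin x y) = x := by
  cases x <;> cases y <;> rfl

theorem pJoin_pMeet_self : pJoin x (pMeet x y) = x := by
  cases x <;> cases y <;> rfl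

theorem pJoin_pMeet_cancel : pJoin (pMeet x y) y = y := by
  cases x <;> cases y <;> rfl

theorem pMeet_pJoin_cancel : pMeet (pJoin x y) y = y := by
  cases x <;> cases y <;> rfl

theorem pMeet_assoc : pMeet (pMeet x y) z = pMeet x (pMeet y z) := by
  cases x <;> cases y <;> cases z <;> rfl

theorem pJoin_assoc : pJoin (pJoin x y) z = pJoin x (pJoin y z) := by
  cases x <;> cases y <;> cases z <;> rfl

theorem pMeet_pJoin_distrib_right : pMeet (pJoin x y) z = pJoin (pMeet x z) (pMeet y z) := by
  cases x <;> cases y <;> cases z <;> rfl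

theorem pMeet_pJoin_distrib_left : pMeet x (pJoin y z) = pJoin (pMeet x y) (pMeet x z) := by
  cases x <;> cases y <;> cases z <;> rfl

theorem greenD_iff_isSome_eq :
    (pMeet (pMeet x y) x = x ∧ pMeet (pMeet y x) y = y) ↔ x.isSome = y.isSome := by
  cases x <;> cases y <;> simp [pMeet]

end PHat

section DQuotient

variable {I P : Type*}

def dQuot (x : I → Option P) : I → Bool := fun i => (x i).isSome

theorem dQuot_prodMeet (x y : I → Option P) (i : I) :
    dQuot (prodMeet x y) i = (dQuot x i && dQuot y i) :=
  pMeet_isSome (x i) (y i)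

theorem dQuot_prodJoin (x y : I → Option P) (i : I) :
    dQuot (prodJoin x y) i = (dQuot x i || dQuot y i) :=
  pJoin_isSome (x i) (y i)

theorem prodD_iff_dQuot_eq (x y : I → Option P) : prodD x y ↔ dQuot x = dQuot y := by
  simp only [prodD, prodMeet, funext_iff, ← forall_and, greenD_iff_isSome_eq]
  rfl

theorem dQuot_surjective [Nonempty P] : Function.Surjective (dQuot : (I → Option P) → I → Bool) :=
  fun b => by
    obtain ⟨p⟩ := ‹Nonempty P›
    refine ⟨fun i => bif b i then some p else none, funext fun i => ?_⟩
    show (bif b i then some p else none).isSome = b i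
    cases b i <;> rfl

variable {h : Type*}

theorem mem_pullbackH_iff (e : h → I → Bool) (x : I → Option P) :
    x ∈ pullbackH e ↔ ∃ a, dQuot x = e a :=
  exists_congr fun _ => funext_iff.symm

variable [Lattice h] {e : h → I → Bool} {x y : I → Option P} {a b : h}

theorem dQuot_prodMeet_eq (he_inf : ∀ a b i, e (a ⊓ b) i = (e a i && e b i))
    (ha : dQuot x = e a) (hb : dQuot y = e b) : dQuot (prodMeet x y) = e (a ⊓ b) :=
  funext fun i => by rw [dQuot_prodMeet, ha, hb, he_inf]

theorem dQuot_prodJoin_eq (he_sup : ∀ a b i, e (a ⊔ b) i = (e a i || e b i))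
    (ha : dQuot x = e a) (hb : dQuot y = e b) : dQuot (prodJoin x y) = e (a ⊔ b) :=
  funext fun i => by rw [dQuot_prodJoin, ha, hb, he_sup]

end DQuotient

/-- H is a strongly distributive skew lattice under the componentwise operations, and
its quotient H/D by Green's relation is isomorphic to h as a lattice. -/
theorem pullbackH_skew_lattice {I P h : Type*} [Nonempty P] [Order.Frame h]
    (e : h → I → Bool) (he_inj : Function.Injective e)
    (he_inf : ∀ a b i, e (a ⊓ b) i = (e a i && e b i))
    (he_sup : ∀ a b i, e (a ⊔ b) i = (e a i || e b i)) :
    -- H is closed under the componentwise operations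
    (∀ x ∈ pullbackH (P := P) e, ∀ y ∈ pullbackH (P := P) e,
        prodMeet x y ∈ pullbackH (P := P) e ∧ prodJoin x y ∈ pullbackH (P := P) e) ∧
    -- H is a strongly distributive skew lattice
    (∀ x ∈ pullbackH (P := P) e,
        prodMeet x x = x ∧ prodJoin x x = x) ∧
    (∀ x ∈ pullbackH (P := P) e, ∀ y ∈ pullbackH (P := P) e,
        prodMeet x (prodJoin x y) = x ∧ prodJoin x (prodMeet x y) = x ∧
        prodJoin (prodMeet x y) y = y ∧ prodMeet (prodJoin x y) y = y) ∧
    (∀ x ∈ pullbackH (P := P) e, ∀ y ∈ pullbackH (P := P) e, ∀ z ∈ pullbackH (P := P) e,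
        prodMeet (prodMeet x y) z = prodMeet x (prodMeet y z) ∧
        prodJoin (prodJoin x y) z = prodJoin x (prodJoin y z) ∧
        prodMeet (prodJoin x y) z = prodJoin (prodMeet x z) (prodMeet y z) ∧
        prodMeet x (prodJoin y z) = prodJoin (prodMeet x y) (prodMeet x z)) ∧
    -- H/D ≅ h as lattices
    (∃ φ : (I → Option P) → h,
        (∀ a : h, ∃ x ∈ pullbackH (P := P) e, φ x = a) ∧
        (∀ x ∈ pullbackH (P := P) e, ∀ y ∈ pullbackH (P := P) e,
            (prodD x y ↔ φ x = φ y) ∧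
            φ (prodMeet x y) = φ x ⊓ φ y ∧
            φ (prodJoin x y) = φ x ⊔ φ y)) := by
  have invFun_e := Function.leftInverse_invFun he_inj
  refine ⟨fun x hx y hy => ?_, fun x _ => ⟨funext fun i => pMeet_self (x i),
      funext fun i => pJoin_self (x i)⟩,
    fun x _ y _ => ⟨funext fun i => pMeet_pJoin_self (x i) (y i),
      funext fun i => pJoin_pMeet_self (x i) (y i), funext fun i => pJoin_pMeet_cancel (x i) (y i),
      funext fun i => pMeet_pJoin_cancel (x i) (y i)⟩,
    fun x _ y _ z _ => ⟨funext fun i => pMeet_assoc (x i) (y i) (z i),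
      funext fun i => pJoin_assoc (x i) (y i) (z i),
      funext fun i => pMeet_pJoin_distrib_right (x i) (y i) (z i),
      funext fun i => pMeet_pJoin_distrib_left (x i) (y i) (z i)⟩,
    Function.invFun e ∘ dQuot, fun a => ?_, fun x hx y hy => ?_⟩
  all_goals simp only [mem_pullbackH_iff] at *
  · obtain ⟨a, ha⟩ := hx
    obtain ⟨b, hb⟩ := hy
    exact ⟨⟨a ⊓ b, dQuot_prodMeet_eq he_inf ha hb⟩, ⟨a ⊔ b, dQuot_prodJoin_eq he_sup ha hb⟩⟩
  · obtain ⟨x, hx⟩ := dQuot_surjective (P := P) (e a)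
    exact ⟨x, ⟨a, hx⟩, (congrArg _ hx).trans (invFun_e a)⟩
  · obtain ⟨a, ha⟩ := hx
    obtain ⟨b, hb⟩ := hy
    simp only [Function.comp_apply, prodD_iff_dQuot_eq, dQuot_prodMeet_eq he_inf ha hb,
      dQuot_prodJoin_eq he_sup ha hb, ha, hb, invFun_e _, he_inj.eq_iff, and_self]
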